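/- Let G be a finite simple graph on vertex set [n] and let h, k be integers with 1 ≤ h ≤ k ≤ n/2. Let B be the (n;k,h)-binomial matrix, and let L_h and L_k be the Laplacian matrices of the token graphs F_h(G) and F_k(G). If v is an eigenvector of L_h with eigenvalue λ, then Bv is nonzero and is an eigenvector of L_k with eigenvalue λ; moreover, if v₁,…,v_m are linearly independent eigenvectors of L_h, then Bv₁,…,Bv_m are linearly independent. -/

import Mathlib

open Finset Matrix
open scoped symmDiff

/-- The `k`-token graph of a graph `G`: vertices are the `k`-subsets of the vertex set,
two subsets `A`, `B` being adjacent iff their symmetric difference is a pair `{a, b}`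
with `a ∈ A`, `b ∈ B` and `a` adjacent to `b` in `G`. -/
def tokenGraph {V : Type*} [DecidableEq V] (G : SimpleGraph V) (k : ℕ) :
    SimpleGraph {s : Finset V // s.card = k} where
  Adj A B := ∃ a b, a ∈ A.1 ∧ b ∈ B.1 ∧ G.Adj a b ∧ A.1 ∆ B.1 = {a, b}
  symm := by
    constructor
    rintro A B ⟨a, b, ha, hb, hab, hd⟩
    exact ⟨b, a, hb, ha, hab.symm, by rw [symmDiff_comm, hd, Finset.pair_comm]⟩
  loopless := by
    constructor
    rintro A ⟨a, b, ha, hb, hab, hd⟩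
    rw [symmDiff_self] at hd
    exact Finset.insert_ne_empty a {b} hd.symm

/-- The Laplacian matrix (over `ℝ`) of a finite simple graph: `L = D - A`. -/
noncomputable def Lap {V : Type*} [Fintype V] [DecidableEq V] (G : SimpleGraph V) :
    Matrix V V ℝ :=
  letI := Classical.decRel G.Adj
  G.lapMatrix ℝ

/-- The `(n;k₂,k₁)`-binomial matrix: rows indexed by the `k₂`-subsets, columns by the
`k₁`-subsets of `Fin n`; entry is `1` iff the column subset is contained in the row subset. -/
def binMatrix2 (n k₂ k₁ : ℕ) :
    Matrix {s : Finset (Fin n) // s.card = k₂} {s : Finset (Fin n) // s.card = k₁} ℝ :=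
  Matrix.of fun A X => if X.1 ⊆ A.1 then 1 else 0

/-!
Let `τ` range over the transpositions `(a b)` given by the darts of `G`, acting on `k`-subsets.
Then `2 L_k w = ∑_τ (w - w ∘ τ)`: a dart that does not cross a subset `A` fixes it, and every
neighbour of `A` in the token graph comes from exactly two darts, one in each direction. The
binomial matrix `B` is invariant under relabelling the ground set, so it commutes with every
`τ`; hence `L_k B = B L_h`, and `B` maps `λ`-eigenvectors to `λ`-eigenvectors.

It remains to see that `B` is injective. As `B_{j+1,j} B_{j,h} = (j + 1 - h) B_{j+1,h}`, it
suffices to treat the up operators `U_j = B_{j+1,j}`, and for these the relation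
`U_jᵀ U_j = D_j D_jᵀ + (n - 2j)` with `D_j = B_{j,j-1}` gives `‖U_j w‖² ≥ (n - 2j) ‖w‖²`.
-/

lemma lap_mulVec_apply {W : Type*} [Fintype W] [DecidableEq W] (H : SimpleGraph W)
    [DecidableRel H.Adj] (w : W → ℝ) (x : W) :
    (Lap H *ᵥ w) x = ∑ y ∈ H.neighborFinset x, (w x - w y) := by
  rw [Lap, SimpleGraph.lapMatrix_mulVec_apply, sum_sub_distrib, sum_const, nsmul_eq_mul,
    SimpleGraph.card_neighborFinset_eq_degree]
  -- `Lap` is built with the classical instance `Classical.decRel H.Adj`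
  congr!

section TokenGraph

variable {V : Type*} {k : ℕ}

def tokenPerm (σ : Equiv.Perm V) : Equiv.Perm {s : Finset V // s.card = k} :=
  σ.finsetCongr.subtypeEquiv fun s => by simp [Equiv.finsetCongr_apply]

@[simp]
lemma tokenPerm_apply_coe (σ : Equiv.Perm V) (A : {s : Finset V // s.card = k}) :
    (tokenPerm σ A : Finset V) = A.1.map σ.toEmbedding :=
  rfl

variable [DecidableEq V]

lemma mem_tokenPerm_swap {a b x : V} {A : {s : Finset V // s.card = k}} :
    x ∈ (tokenPerm (Equiv.swap a b) A : Finset V) ↔ Equiv.swap a b x ∈ (A : Finset V) := by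
  simp [Finset.mem_map_equiv]

lemma tokenPerm_swap_eq_self {a b : V} {A : {s : Finset V // s.card = k}}
    (h : a ∈ (A : Finset V) ↔ b ∈ (A : Finset V)) : tokenPerm (Equiv.swap a b) A = A := by
  ext x
  rw [mem_tokenPerm_swap, Equiv.swap_apply_def]
  split_ifs <;> grind

lemma sdiff_tokenPerm_swap {a b : V} {A : {s : Finset V // s.card = k}}
    (ha : a ∈ (A : Finset V)) (hb : b ∉ (A : Finset V)) :
    (A : Finset V) \ tokenPerm (Equiv.swap a b) A = {a} := by
  ext x
  rw [mem_sdiff, mem_tokenPerm_swap, mem_singleton, Equiv.swap_apply_def]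
  split_ifs <;> grind

lemma tokenPerm_swap_sdiff {a b : V} {A : {s : Finset V // s.card = k}}
    (ha : a ∈ (A : Finset V)) (hb : b ∉ (A : Finset V)) :
    (tokenPerm (Equiv.swap a b) A : Finset V) \ A = {b} := by
  ext x
  rw [mem_sdiff, mem_tokenPerm_swap, mem_singleton, Equiv.swap_apply_def]
  split_ifs <;> grind

lemma tokenGraph_adj_iff (G : SimpleGraph V) {A B : {s : Finset V // s.card = k}} :
    (tokenGraph G k).Adj A B ↔ ∃ a ∈ (A : Finset V), ∃ b ∉ (A : Finset V),
      G.Adj a b ∧ tokenPerm (Equiv.swap a b) A = B := by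
  constructor
  · rintro ⟨a, b, ha, hb, hab, hd⟩
    have hmem (x : V) : x ∈ A.1 ∆ B.1 ↔ x = a ∨ x = b := by
      rw [hd, mem_insert, mem_singleton]
    simp only [mem_symmDiff] at hmem
    have hbA : b ∉ (A : Finset V) := by grind
    refine ⟨a, ha, b, hbA, hab, ?_⟩
    ext x
    rw [mem_tokenPerm_swap, Equiv.swap_apply_def]
    split_ifs <;> grind
  · rintro ⟨a, ha, b, hb, hab, rfl⟩
    refine ⟨a, b, ha, ?_, hab, ?_⟩
    · simpa [mem_tokenPerm_swap] using ha
    · rw [symmDiff_def, sup_eq_union, sdiff_tokenPerm_swap ha hb, tokenPerm_swap_sdiff ha hb]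
      rfl

variable [Fintype V] (G : SimpleGraph V) [DecidableRel G.Adj]

lemma neighborFinset_tokenGraph [DecidableRel (tokenGraph G k).Adj]
    (A : {s : Finset V // s.card = k}) :
    (tokenGraph G k).neighborFinset A =
      ({d : G.Dart | d.fst ∈ (A : Finset V) ∧ d.snd ∉ (A : Finset V)} : Finset _).image
        fun d => tokenPerm (Equiv.swap d.fst d.snd) A := by
  ext B
  simp only [SimpleGraph.mem_neighborFinset, tokenGraph_adj_iff, mem_image, mem_filter,
    mem_univ, true_and]
  constructor
  · rintro ⟨a, ha, b, hb, hab, rfl⟩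
    exact ⟨⟨(a, b), hab⟩, ⟨ha, hb⟩, rfl⟩
  · rintro ⟨d, ⟨ha, hb⟩, rfl⟩
    exact ⟨d.fst, ha, d.snd, hb, d.adj, rfl⟩

lemma lap_tokenGraph_mulVec_apply (w : {s : Finset V // s.card = k} → ℝ)
    (A : {s : Finset V // s.card = k}) :
    (Lap (tokenGraph G k) *ᵥ w) A =
      ∑ d : G.Dart with d.fst ∈ (A : Finset V) ∧ d.snd ∉ (A : Finset V),
        (w A - w (tokenPerm (Equiv.swap d.fst d.snd) A)) := by
  classical
  rw [lap_mulVec_apply, neighborFinset_tokenGraph, sum_image]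
  intro d hd d' hd' h
  simp only [coe_filter, mem_univ, true_and, Set.mem_ofPred_eq] at hd hd'
  beta_reduce at h
  have hfst := sdiff_tokenPerm_swap hd.1 hd.2
  have hsnd := tokenPerm_swap_sdiff hd.1 hd.2
  rw [h, sdiff_tokenPerm_swap hd'.1 hd'.2, singleton_inj] at hfst
  rw [h, tokenPerm_swap_sdiff hd'.1 hd'.2, singleton_inj] at hsnd
  exact SimpleGraph.Dart.ext _ _ (Prod.ext hfst.symm hsnd.symm)

lemma two_smul_lap_tokenGraph_mulVec (w : {s : Finset V // s.card = k} → ℝ) :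
    (2 : ℝ) • (Lap (tokenGraph G k) *ᵥ w) =
      ∑ d : G.Dart, (w - w ∘ tokenPerm (Equiv.swap d.fst d.snd)) := by
  funext A
  set c : G.Dart → ℝ := fun d => w A - w (tokenPerm (Equiv.swap d.fst d.snd) A)
  set crossing : G.Dart → Prop := fun d => d.fst ∈ (A : Finset V) ∧ d.snd ∉ (A : Finset V)
  have hc_symm : ∀ d, c d.symm = c d := fun d => by simp [c, Equiv.swap_comm]
  have hsplit (d : G.Dart) :
      c d = (if crossing d then c d else 0) + if crossing d.symm then c d else 0 := by
    by_cases h₁ : crossing d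
    · have : ¬ crossing d.symm := fun h => h.2 h₁.1
      simp [h₁, this]
    by_cases h₂ : crossing d.symm
    · simp [h₁, h₂]
    · have : tokenPerm (Equiv.swap d.fst d.snd) A = A :=
        tokenPerm_swap_eq_self <| by
          simp only [crossing, SimpleGraph.Dart.symm_toProd] at h₁ h₂
          tauto
      simp [h₁, h₂, c, this]
  have hreflect :
      ∑ d, (if crossing d.symm then c d else 0) = ∑ d, if crossing d then c d else 0 := by
    conv_lhs => arg 2; ext d; rw [← hc_symm]
    exact Equiv.sum_comp SimpleGraph.Dart.symm_involutive.toPerm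
      fun d => if crossing d then c d else 0
  simp only [Pi.smul_apply, smul_eq_mul, Finset.sum_apply, Pi.sub_apply, Function.comp_apply]
  rw [lap_tokenGraph_mulVec_apply, sum_filter, Finset.sum_congr rfl fun d _ => hsplit d,
    sum_add_distrib, hreflect]
  ring

end TokenGraph

section Counting

variable {V : Type*} [Fintype V] [DecidableEq V] {m : ℕ}

lemma card_filter_subset_subset {X U : Finset V} (hXU : X ⊆ U) (hX : #X ≤ m) :
    #{Y : {s : Finset V // s.card = m} | X ⊆ Y.1 ∧ Y.1 ⊆ U} = (#U - #X).choose (m - #X) := by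
  rw [← card_filter_powersetCard_subset X U m hXU hX, ← card_map (Function.Embedding.subtype _)]
  congr 1
  ext s
  simp only [mem_map, mem_filter, mem_univ, true_and, Function.Embedding.coe_subtype,
    Subtype.exists, exists_and_left, exists_prop, exists_eq_right_right, mem_powersetCard]
  tauto

lemma card_filter_subset (W : Finset V) :
    #{Z : {s : Finset V // s.card = m} | Z.1 ⊆ W} = (#W).choose m := by
  simpa using card_filter_subset_subset (empty_subset W) m.zero_le

lemma card_filter_superset {W : Finset V} (hW : #W ≤ m) :
    #{A : {s : Finset V // s.card = m} | W ⊆ A.1} = (Fintype.card V - #W).choose (m - #W) := by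
  simpa using card_filter_subset_subset (subset_univ W) hW

end Counting

section BinomialMatrix

variable {n h j k : ℕ}

lemma submatrix_tokenPerm_binMatrix2 (σ : Equiv.Perm (Fin n)) :
    (binMatrix2 n k h).submatrix (tokenPerm σ) (tokenPerm σ) = binMatrix2 n k h := by
  ext A X
  simp [binMatrix2]

lemma binMatrix2_mulVec_comp_tokenPerm (σ : Equiv.Perm (Fin n))
    (v : {s : Finset (Fin n) // s.card = h} → ℝ) :
    binMatrix2 n k h *ᵥ (v ∘ tokenPerm σ) = (binMatrix2 n k h *ᵥ v) ∘ tokenPerm σ := by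
  conv_lhs => rw [← submatrix_tokenPerm_binMatrix2 σ, submatrix_mulVec_equiv]
  simp [Function.comp_def]

lemma lap_tokenGraph_mulVec_binMatrix2_mulVec (G : SimpleGraph (Fin n))
    (v : {s : Finset (Fin n) // s.card = h} → ℝ) :
    Lap (tokenGraph G k) *ᵥ (binMatrix2 n k h *ᵥ v) =
      binMatrix2 n k h *ᵥ (Lap (tokenGraph G h) *ᵥ v) := by
  classical
  refine smul_right_injective _ (two_ne_zero (α := ℝ)) ?_
  calc (2 : ℝ) • (Lap (tokenGraph G k) *ᵥ (binMatrix2 n k h *ᵥ v))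
      = ∑ d : G.Dart, (binMatrix2 n k h *ᵥ v -
          (binMatrix2 n k h *ᵥ v) ∘ tokenPerm (Equiv.swap d.fst d.snd)) :=
        two_smul_lap_tokenGraph_mulVec G _
    _ = ∑ d : G.Dart, binMatrix2 n k h *ᵥ (v - v ∘ tokenPerm (Equiv.swap d.fst d.snd)) := by
        simp only [mulVec_sub, binMatrix2_mulVec_comp_tokenPerm]
    _ = binMatrix2 n k h *ᵥ ((2 : ℝ) • (Lap (tokenGraph G h) *ᵥ v)) := by
        rw [two_smul_lap_tokenGraph_mulVec, mulVec_sum]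
    _ = (2 : ℝ) • (binMatrix2 n k h *ᵥ (Lap (tokenGraph G h) *ᵥ v)) := mulVec_smul _ _ _

lemma binMatrix2_mul_binMatrix2_apply (A : {s : Finset (Fin n) // s.card = k})
    (X : {s : Finset (Fin n) // s.card = h}) :
    (binMatrix2 n k j * binMatrix2 n j h) A X =
      #{Y : {s : Finset (Fin n) // s.card = j} | X.1 ⊆ Y.1 ∧ Y.1 ⊆ A.1} := by
  simp [binMatrix2, mul_apply, ← ite_and]

lemma transpose_binMatrix2_mul_binMatrix2_apply (X Y : {s : Finset (Fin n) // s.card = j}) :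
    ((binMatrix2 n k j)ᵀ * binMatrix2 n k j) X Y =
      #{A : {s : Finset (Fin n) // s.card = k} | X.1 ∪ Y.1 ⊆ A.1} := by
  simp [binMatrix2, mul_apply, ← ite_and, union_subset_iff, and_comm]

lemma binMatrix2_mul_transpose_binMatrix2_apply (X Y : {s : Finset (Fin n) // s.card = j}) :
    (binMatrix2 n j h * (binMatrix2 n j h)ᵀ) X Y =
      #{Z : {s : Finset (Fin n) // s.card = h} | Z.1 ⊆ X.1 ∩ Y.1} := by
  simp [binMatrix2, mul_apply, ← ite_and, subset_inter_iff, and_comm]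

lemma binMatrix2_self : binMatrix2 n k k = 1 := by
  ext A X
  simp only [binMatrix2, of_apply, one_apply, ← Subtype.val_inj]
  congr 1
  exact propext ⟨fun hXA => (eq_of_subset_of_card_le hXA (by rw [X.2, A.2])).symm,
    fun h => h ▸ subset_rfl⟩

lemma binMatrix2_succ_mul_binMatrix2 (hhj : h ≤ j) :
    binMatrix2 n (j + 1) j * binMatrix2 n j h =
      ((j + 1 - h : ℕ) : ℝ) • binMatrix2 n (j + 1) h := by
  ext A X
  rw [binMatrix2_mul_binMatrix2_apply, Matrix.smul_apply, binMatrix2, of_apply]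
  by_cases hXA : X.1 ⊆ A.1
  · rw [card_filter_subset_subset hXA (X.2.trans_le hhj), A.2, X.2, if_pos hXA,
      show j + 1 - h = (j - h) + 1 by omega, Nat.choose_succ_self_right, smul_eq_mul, mul_one]
  · rw [if_neg hXA, smul_zero, Nat.cast_eq_zero, card_eq_zero, filter_eq_empty_iff]
    exact fun Y _ hY => hXA (hY.1.trans hY.2)

lemma transpose_binMatrix2_succ_mul_binMatrix2 (hj : 1 ≤ j) :
    (binMatrix2 n (j + 1) j)ᵀ * binMatrix2 n (j + 1) j =
      binMatrix2 n j (j - 1) * (binMatrix2 n j (j - 1))ᵀ + ((n : ℝ) - 2 * j) • 1 := by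
  ext X Y
  rw [Matrix.add_apply, transpose_binMatrix2_mul_binMatrix2_apply,
    binMatrix2_mul_transpose_binMatrix2_apply, card_filter_subset, Matrix.smul_apply, one_apply]
  have hcard := card_union_add_card_inter X.1 Y.1
  rw [X.2, Y.2] at hcard
  rcases eq_or_ne X Y with rfl | hXY
  · have hjn : j ≤ n := by simpa [X.2] using card_le_univ X.1
    rw [union_self, inter_self, card_filter_superset (X.2.trans_le j.le_succ), X.2, if_pos rfl,
      Fintype.card_fin, show j + 1 - j = 1 by omega, Nat.choose_one_right,
      Nat.choose_symm hj, Nat.choose_one_right]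
    push_cast [hjn, hj]
    ring
  have hlt : #(X.1 ∩ Y.1) < j := by
    by_contra! hle
    have hXY' : X.1 ∩ Y.1 = X.1 := eq_of_subset_of_card_le inter_subset_left (X.2.trans_le hle)
    exact hXY <| Subtype.ext <|
      eq_of_subset_of_card_le (hXY' ▸ inter_subset_right) (by rw [X.2, Y.2])
  rw [if_neg hXY, smul_zero, add_zero]
  rcases (Nat.le_sub_one_of_lt hlt).eq_or_lt with hc | hc
  · rw [card_filter_superset (by omega), show #(X.1 ∪ Y.1) = j + 1 by omega, hc, Nat.sub_self,
      Nat.choose_zero_right, Nat.choose_self]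
  · rw [Nat.choose_eq_zero_of_lt hc, Nat.cast_zero, Nat.cast_eq_zero, card_eq_zero,
      filter_eq_empty_iff]
    exact fun A _ hA => by have := card_le_card hA; rw [A.2] at this; omega

lemma binMatrix2_succ_mulVec_eq_zero_iff (hj : 1 ≤ j) (hjn : 2 * j < n)
    {w : {s : Finset (Fin n) // s.card = j} → ℝ} :
    binMatrix2 n (j + 1) j *ᵥ w = 0 ↔ w = 0 := by
  refine ⟨fun hw => ?_, fun hw => hw ▸ mulVec_zero _⟩
  set D := binMatrix2 n j (j - 1)
  have hnorm : (Dᵀ *ᵥ w) ⬝ᵥ (Dᵀ *ᵥ w) + ((n : ℝ) - 2 * j) * (w ⬝ᵥ w) = 0 := by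
    have h0 : w ⬝ᵥ (((binMatrix2 n (j + 1) j)ᵀ * binMatrix2 n (j + 1) j) *ᵥ w) = 0 := by
      rw [← mulVec_mulVec, hw, mulVec_zero, dotProduct_zero]
    rwa [transpose_binMatrix2_succ_mul_binMatrix2 hj, add_mulVec, dotProduct_add,
      ← mulVec_mulVec, dotProduct_mulVec, ← mulVec_transpose, smul_mulVec, one_mulVec,
      dotProduct_smul, smul_eq_mul] at h0
  have hpos : (0 : ℝ) < n - 2 * j := sub_pos.mpr (by exact_mod_cast hjn)
  have hD : 0 ≤ (Dᵀ *ᵥ w) ⬝ᵥ (Dᵀ *ᵥ w) := sum_nonneg fun _ _ => mul_self_nonneg _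
  have hw' : 0 ≤ w ⬝ᵥ w := sum_nonneg fun _ _ => mul_self_nonneg _
  rw [← dotProduct_self_eq_zero]
  nlinarith

lemma binMatrix2_mulVec_eq_zero_iff (hh : 1 ≤ h) (hhk : h ≤ k) (hkn : 2 * k ≤ n)
    {v : {s : Finset (Fin n) // s.card = h} → ℝ} :
    binMatrix2 n k h *ᵥ v = 0 ↔ v = 0 := by
  induction k, hhk using Nat.le_induction with
  | base => rw [binMatrix2_self, one_mulVec]
  | succ j hhj ih =>
    have hc : ((j + 1 - h : ℕ) : ℝ) ≠ 0 := Nat.cast_ne_zero.mpr (by omega)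
    rw [← ih (by omega), ← binMatrix2_succ_mulVec_eq_zero_iff (hh.trans hhj) (by omega),
      mulVec_mulVec, binMatrix2_succ_mul_binMatrix2 hhj, smul_mulVec, smul_eq_zero,
      or_iff_right hc]

end BinomialMatrix

/-- For `1 ≤ h ≤ k ≤ n/2` and `B` the `(n;k,h)`-binomial matrix:
every eigenvector `v` of `L_h` with eigenvalue `λ` yields a nonzero eigenvector `B v` of
`L_k` with eigenvalue `λ`; moreover, linearly independent eigenvectors of `L_h` are mapped
to linearly independent vectors. -/
theorem binMatrix2_eigenvector_and_linearIndependent (n h k : ℕ)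
    (hh : 1 ≤ h) (hhk : h ≤ k) (hkn : 2 * k ≤ n) (G : SimpleGraph (Fin n)) :
    (∀ (lam : ℝ) (v : {s : Finset (Fin n) // s.card = h} → ℝ), v ≠ 0 →
        Lap (tokenGraph G h) *ᵥ v = lam • v →
        binMatrix2 n k h *ᵥ v ≠ 0 ∧
          Lap (tokenGraph G k) *ᵥ (binMatrix2 n k h *ᵥ v) =
            lam • (binMatrix2 n k h *ᵥ v)) ∧
      ∀ (m : ℕ) (v : Fin m → {s : Finset (Fin n) // s.card = h} → ℝ) (lam : Fin m → ℝ),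
        (∀ i, v i ≠ 0) → (∀ i, Lap (tokenGraph G h) *ᵥ v i = lam i • v i) →
        LinearIndependent ℝ v →
        LinearIndependent ℝ fun i => binMatrix2 n k h *ᵥ v i := by
  refine ⟨fun lam v hv hev => ⟨(binMatrix2_mulVec_eq_zero_iff hh hhk hkn).not.mpr hv, ?_⟩,
    fun m v lam _ _ hli => hli.map' (binMatrix2 n k h).mulVecLin ?_⟩
  · rw [lap_tokenGraph_mulVec_binMatrix2_mulVec, hev, mulVec_smul]
  · exact LinearMap.ker_eq_bot'.mpr fun w hw => (binMatrix2_mulVec_eq_zero_iff hh hhk hkn).mp hw
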